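/- arXiv:2407.04388 — 6 statements merged into one kernel-verified Lean document; each statement's English description precedes it below -/
import Mathlib

section
/- Let W = {1 = w₁ < w₂ < ⋯} be a set of positive integers with least element 1 whose complement in the positive integers, W̄ := ℤ⁺ \ W = {w̄₁ < w̄₂ < ⋯}, is infinite. Suppose there exists a strictly increasing sequence of indices i₁ < i₂ < ⋯ such that lim_{t→∞} (w̄_{i_t + 1} − w̄_{i_t}) = +∞ and limsup_{t→∞} |W̄ ∩ (w̄_{i_t}, w̄_{i_{t+1}})| < +∞ (i.e. the number of elements of W̄ strictly between w̄_{i_t} and w̄_{i_{t+1}} is bounded uniformly in t). Then there does not exist a minimal additive complement to W. -/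
/-!
A minimal complement `C` of `W` gives every `c ∈ C` a private target `f c`: an integer
represented as `c + w` but by no other element of `C`. Since `W` is bounded below, `C` is
unbounded below. Take `K + 2` elements `c` of `C` and then `x ∈ C` far below them: the numbers
`f c - x` are `K + 2` distinct elements of `W̄`, all lying in a window of fixed width `Δ` that is
as far to the right as we like. Far enough out, the gaps `w̄_{i_t + 1} - w̄_{i_t}` exceed `Δ`, so
the window fits in a single block `(w̄_{i_t}, w̄_{i_{t+1}}]`, which holds at most `K + 1`
elements of `W̄`.
-/

open Pointwise

/-- `C` is a minimal additive complement to `W`: `C + W = ℤ` and no proper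
subset of `C` is an additive complement to `W`. -/
def IsMinAddComplement (C W : Set ℤ) : Prop :=
  C + W = Set.univ ∧ ∀ C' ⊂ C, C' + W ≠ Set.univ

lemma not_bddBelow_of_add_eq_univ {C W : Set ℤ} (hCW : C + W = Set.univ) (hW : BddBelow W) :
    ¬ BddBelow C := by
  rintro ⟨b, hb⟩
  obtain ⟨w₀, hw₀⟩ := hW
  obtain ⟨c, hc, w, hw, hcw⟩ : b + w₀ - 1 ∈ C + W := hCW ▸ Set.mem_univ _
  linarith [hb hc, hw₀ hw]

lemma IsMinAddComplement.exists_private {C W : Set ℤ} (hC : IsMinAddComplement C W)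
    {c : ℤ} (hc : c ∈ C) : ∃ n, n - c ∈ W ∧ ∀ c' ∈ C, n - c' ∈ W → c' = c := by
  have hsub : C \ {c} ⊂ C := Set.sdiff_singleton_ssubset.2 hc
  obtain ⟨n, hn⟩ : ∃ n, n ∉ C \ {c} + W := by
    by_contra! h
    exact hC.2 _ hsub (Set.eq_univ_of_forall h)
  have hrep : ∀ c' ∈ C, n - c' ∈ W → c' = c := fun c' hc' hw => by
    by_contra hne
    exact hn ⟨c', ⟨hc', hne⟩, n - c', hw, add_sub_cancel _ _⟩
  obtain ⟨c₀, hc₀, w, hw, rfl⟩ : n ∈ C + W := hC.1 ▸ Set.mem_univ _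
  obtain rfl := hrep c₀ hc₀ (by simpa using hw)
  exact ⟨c₀ + w, by simpa using hw, hrep⟩

lemma IsMinAddComplement.exists_finset_forall_translate_notMem {C W : Set ℤ}
    (hC : IsMinAddComplement C W) (hW : BddBelow W) (n : ℕ) :
    ∃ P : Finset ℤ, P.card = n ∧ ∀ L, ∃ x, ∀ p ∈ P, L < p - x ∧ p - x ∉ W := by
  have hCbdd := not_bddBelow_of_add_eq_univ hC.1 hW
  obtain ⟨D, hDC, hDcard⟩ := (Set.infinite_of_not_bddBelow hCbdd).exists_subset_card_eq n
  choose! f hfW hfuniq using fun c => hC.exists_private (c := c)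
  have hinj : Set.InjOn f D := fun c hc c' hc' h =>
    hfuniq c' (hDC hc') c (hDC hc) (h ▸ hfW c (hDC hc))
  refine ⟨D.image f, hDcard ▸ Finset.card_image_of_injOn hinj, fun L => ?_⟩
  obtain ⟨b, hb⟩ := (D ∪ (D.image f).image (· - L)).bddBelow
  obtain ⟨x, hxC, hxb⟩ := not_bddBelow_iff.1 hCbdd b
  refine ⟨x, Finset.forall_mem_image.2 fun c hc => ?_⟩
  have hcb : b ≤ c := hb (Finset.mem_union_left _ hc)
  have hfcb : b ≤ f c - L :=
    hb (Finset.mem_union_right _ (Finset.mem_image_of_mem _ (Finset.mem_image_of_mem f hc)))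
  refine ⟨by linarith, fun hfx => ?_⟩
  linarith [hfuniq c (hDC hc) x hxC hfx]

section Blocks

variable {wbar : ℕ → ℤ} {i : ℕ → ℕ}

lemma StrictMono.exists_block_index (hi : StrictMono i) {T m : ℕ} (hm : i T < m) :
    ∃ t ≥ T, i t < m ∧ m ≤ i (t + 1) := by
  have hshift : StrictMono fun s => i (T + s) := hi.comp fun _ _ h => by omega
  obtain ⟨s, hs, hs'⟩ := hshift.exists_between_of_tendsto_atTop hshift.tendsto_atTop hm
  exact ⟨T + s, by omega, hs, hs'⟩

lemma mem_block_of_le_add (hmono : StrictMono wbar) {Δ : ℤ} {t m n : ℕ}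
    (hgap : Δ < wbar (i (t + 1) + 1) - wbar (i (t + 1))) (hm : i t < m ∧ m ≤ i (t + 1))
    (hmn : m ≤ n) (hn : wbar n ≤ wbar m + Δ) :
    wbar n ∈
      insert (wbar (i (t + 1))) (Set.range wbar ∩ Set.Ioo (wbar (i t)) (wbar (i (t + 1)))) := by
  have hn_le : n ≤ i (t + 1) := by
    by_contra! h
    have h₁ : wbar (i (t + 1) + 1) ≤ wbar n := hmono.monotone h
    have h₂ : wbar m ≤ wbar (i (t + 1)) := hmono.monotone hm.2
    omega
  rcases hn_le.eq_or_lt with rfl | hlt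
  · exact Set.mem_insert _ _
  · exact Or.inr ⟨⟨n, rfl⟩, hmono (hm.1.trans_le hmn), hmono hlt⟩

lemma card_le_of_forall_sub_le (hmono : StrictMono wbar) (hi : StrictMono i) {Δ : ℤ} {T K : ℕ}
    (hgap : ∀ t ≥ T, Δ < wbar (i t + 1) - wbar (i t))
    (hK : ∀ t, (Set.range wbar ∩ Set.Ioo (wbar (i t)) (wbar (i (t + 1)))).ncard ≤ K)
    {F : Finset ℤ} (hF : ↑F ⊆ Set.range wbar) (hFT : ∀ y ∈ F, wbar (i T) < y)
    (hFΔ : ∀ y ∈ F, ∀ z ∈ F, z - y ≤ Δ) : F.card ≤ K + 1 := by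
  rcases F.eq_empty_or_nonempty with rfl | hne
  · simp
  obtain ⟨m, hm⟩ := hF (F.min'_mem hne)
  obtain ⟨t, hTt, hblock⟩ :=
    hi.exists_block_index (hmono.lt_iff_lt.1 (hm ▸ hFT _ (F.min'_mem hne)))
  have hsub : ↑F ⊆
      insert (wbar (i (t + 1))) (Set.range wbar ∩ Set.Ioo (wbar (i t)) (wbar (i (t + 1)))) := by
    intro y hy
    obtain ⟨n, rfl⟩ := hF hy
    refine mem_block_of_le_add hmono (hgap _ (by omega)) hblock ?_ ?_
    · exact hmono.le_iff_le.1 (hm ▸ F.min'_le _ hy)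
    · linarith [hm ▸ hFΔ _ (F.min'_mem hne) _ hy]
  have hfin : (Set.range wbar ∩ Set.Ioo (wbar (i t)) (wbar (i (t + 1)))).Finite :=
    (Set.finite_Ioo _ _).inter_of_right _
  calc F.card = (↑F : Set ℤ).ncard := (Set.ncard_coe_finset F).symm
    _ ≤ _ := Set.ncard_le_ncard hsub (hfin.insert _)
    _ ≤ _ := Set.ncard_insert_le _ _
    _ ≤ K + 1 := by gcongr; exact hK t

end Blocks

theorem stmt0_general (W : Set ℤ) (hWpos : W ⊆ {n : ℤ | 0 < n})
    (wbar : ℕ → ℤ) (hmono : StrictMono wbar)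
    (hrange : Set.range wbar = {n : ℤ | 0 < n} \ W)
    (i : ℕ → ℕ) (hi : StrictMono i)
    (htend : Filter.Tendsto (fun t => wbar (i t + 1) - wbar (i t))
      Filter.atTop Filter.atTop)
    (hbdd : ∃ K : ℕ, ∀ t : ℕ,
      (({n : ℤ | 0 < n} \ W) ∩ Set.Ioo (wbar (i t)) (wbar (i (t + 1)))).ncard ≤ K) :
    ¬ ∃ C : Set ℤ, IsMinAddComplement C W := by
  rintro ⟨C, hC⟩
  obtain ⟨K, hK⟩ := hbdd
  rw [← hrange] at hK
  obtain ⟨P, hPcard, hP⟩ :=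
    hC.exists_finset_forall_translate_notMem ⟨0, fun w hw => (hWpos hw).le⟩ (K + 2)
  have hPne : P.Nonempty := Finset.card_pos.1 (by omega)
  obtain ⟨T, hT⟩ := Filter.eventually_atTop.1
    (htend.eventually_gt_atTop (P.max' hPne - P.min' hPne))
  obtain ⟨x, hx⟩ := hP (wbar (i T))
  have hwpos : 0 < wbar (i T) := ((Set.ext_iff.1 hrange _).1 ⟨i T, rfl⟩).1
  have hcard := card_le_of_forall_sub_le hmono hi (fun t ht => hT t ht) hK
    (F := P.image (· - x)) ?range ?far ?width
  · rw [Finset.card_image_of_injective _ (sub_left_injective (b := x))] at hcard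
    omega
  case range =>
    simp only [Finset.coe_image, Set.image_subset_iff, hrange]
    exact fun p hp => ⟨hwpos.trans (hx p hp).1, (hx p hp).2⟩
  case far => simpa using fun p hp => (hx p hp).1
  case width =>
    simp only [Finset.forall_mem_image, sub_sub_sub_cancel_right]
    exact fun p hp q hq => by linarith [P.min'_le p hp, P.le_max' q hq]

/-- If `W` is a set of positive integers with least element 1 whose
complement `W̄` in the positive integers is infinite (enumerated increasingly by
`wbar`), and there is a strictly increasing sequence of indices `i` such that
`wbar (i t + 1) - wbar (i t) → ∞` and the number of elements of `W̄` strictly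
between `wbar (i t)` and `wbar (i (t+1))` is bounded uniformly in `t`, then
there is no minimal additive complement to `W`. -/
theorem stmt0 (W : Set ℤ) (hWpos : W ⊆ {n : ℤ | 0 < n}) (h1W : (1 : ℤ) ∈ W)
    (wbar : ℕ → ℤ) (hmono : StrictMono wbar)
    (hrange : Set.range wbar = {n : ℤ | 0 < n} \ W)
    (i : ℕ → ℕ) (hi : StrictMono i)
    (htend : Filter.Tendsto (fun t => wbar (i t + 1) - wbar (i t))
      Filter.atTop Filter.atTop)
    (hbdd : ∃ K : ℕ, ∀ t : ℕ,
      (({n : ℤ | 0 < n} \ W) ∩ Set.Ioo (wbar (i t)) (wbar (i (t + 1)))).ncard ≤ K) :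
    ¬ ∃ C : Set ℤ, IsMinAddComplement C W :=
  stmt0_general W hWpos wbar hmono hrange i hi htend hbdd
end

section
/- Let m and k be positive integers, let X_m ⊆ {0, 1, …, m−1}, let Y⁽⁰⁾ be a finite set of negative integers each of which is congruent modulo m to some element of X_m, let D ⊆ {0, 1, …, m−1} with D ∩ X_m = ∅, and set Y⁽¹⁾ = D + mkℕ = {d + mkn : d ∈ D, n ∈ ℕ}. Let W = (mℕ + X_m) ∪ Y⁽⁰⁾ ∪ Y⁽¹⁾, where mℕ + X_m = {mn + x : n ∈ ℕ, x ∈ X_m}. Then there does not exist a minimal additive complement to W. -/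
/-!
The set `W` is bounded below, and `W + p ⊆ W` for a suitable `p > 0`: a multiple of `mk` that is
large enough to push the finitely many negative elements of `Y⁰` into `mℕ + X_m`. For such a set
every element `c₀` of a complement `C` is redundant: given `z`, write `z - np = c + w` with `n` so
large that `c = c₀` would put `w` below `W`; then `z = c + (w + np)` with `c ≠ c₀` and `w + np ∈ W`.
-/

open Pointwise

theorem not_isMinAddComplement_of_bddBelow_of_add_mem {W : Set ℤ} (hW : BddBelow W) {p : ℤ}
    (hp : 0 < p) (hWp : ∀ w ∈ W, w + p ∈ W) (C : Set ℤ) : ¬ IsMinAddComplement C W := by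
  rintro ⟨hCW, hmin⟩
  obtain ⟨B, hB⟩ := hW
  obtain ⟨c₀, hc₀⟩ : C.Nonempty := (hCW ▸ Set.univ_nonempty : (C + W).Nonempty).of_add_left
  have hWnp : ∀ n : ℕ, ∀ w ∈ W, w + n * p ∈ W := by
    intro n
    induction n with
    | zero => simp
    | succ n ih =>
      intro w hw
      convert hWp _ (ih w hw) using 1
      push_cast
      ring
  refine hmin (C \ {c₀}) (Set.sdiff_singleton_ssubset.mpr hc₀) (Set.eq_univ_of_forall fun z => ?_)
  obtain ⟨n, hn⟩ := exists_nat_gt (z - c₀ - B)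
  obtain ⟨c, hc, w, hw, hcw⟩ : z - n * p ∈ C + W := hCW ▸ Set.mem_univ _
  have hcc₀ : c ≠ c₀ := by
    rintro rfl
    have : (n : ℤ) ≤ n * p := le_mul_of_one_le_right n.cast_nonneg hp
    linarith [hB hw]
  exact ⟨c, ⟨hc, hcc₀⟩, w + n * p, hWnp n w hw, by linarith⟩

section ArithmeticProgressions

variable {a : ℤ} {X : Set ℤ}

theorem add_mul_mem_setOf_mul_natCast_add {w j : ℤ}
    (hw : w ∈ {w : ℤ | ∃ n : ℕ, ∃ x ∈ X, w = a * n + x}) (hj : 0 ≤ j) :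
    w + a * j ∈ {w : ℤ | ∃ n : ℕ, ∃ x ∈ X, w = a * n + x} := by
  obtain ⟨n, x, hx, rfl⟩ := hw
  refine ⟨n + j.toNat, x, hx, ?_⟩
  push_cast [Int.toNat_of_nonneg hj]
  ring

theorem mem_setOf_mul_natCast_add_of_modEq (ha : 0 < a) {x y : ℤ} (hx : x ∈ X)
    (hyx : y ≡ x [ZMOD a]) (hy : x - a < y) :
    y ∈ {w : ℤ | ∃ n : ℕ, ∃ x ∈ X, w = a * n + x} := by
  obtain ⟨q, hq⟩ := hyx.symm.dvd
  have hq0 : 0 ≤ q := by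
    by_contra! hq0
    nlinarith
  exact ⟨q.toNat, x, hx, by rw [Int.toNat_of_nonneg hq0]; linarith⟩

theorem bddBelow_setOf_mul_natCast_add (ha : 0 ≤ a) (hX : X ⊆ Set.Ici 0) :
    BddBelow {w : ℤ | ∃ n : ℕ, ∃ x ∈ X, w = a * n + x} := by
  refine ⟨0, ?_⟩
  rintro _ ⟨n, x, hx, rfl⟩
  have : (0 : ℤ) ≤ a * n := by positivity
  linarith [Set.mem_Ici.mp (hX hx)]

theorem add_mul_natCast_mem_setOf_add_mul_natCast {w : ℤ}
    (hw : w ∈ {w : ℤ | ∃ x ∈ X, ∃ n : ℕ, w = x + a * n}) (N : ℕ) :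
    w + a * N ∈ {w : ℤ | ∃ x ∈ X, ∃ n : ℕ, w = x + a * n} := by
  obtain ⟨x, hx, n, rfl⟩ := hw
  exact ⟨x, hx, n + N, by push_cast; ring⟩

theorem bddBelow_setOf_add_mul_natCast (ha : 0 ≤ a) (hX : X ⊆ Set.Ici 0) :
    BddBelow {w : ℤ | ∃ x ∈ X, ∃ n : ℕ, w = x + a * n} := by
  refine ⟨0, ?_⟩
  rintro _ ⟨x, hx, n, rfl⟩
  have : (0 : ℤ) ≤ a * n := by positivity
  linarith [Set.mem_Ici.mp (hX hx)]

end ArithmeticProgressions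

theorem stmt1_general (m k : ℤ) (hm : 0 < m) (hk : 0 < k)
    (Xm : Set ℤ) (hXm : Xm ⊆ Set.Icc 0 (m - 1))
    (Y0 : Set ℤ) (hY0fin : Y0.Finite)
    (hY0cong : ∀ y ∈ Y0, ∃ x ∈ Xm, y ≡ x [ZMOD m])
    (D : Set ℤ) (hD : D ⊆ Set.Icc 0 (m - 1))
    (Y1 : Set ℤ) (hY1 : Y1 = {w : ℤ | ∃ d ∈ D, ∃ n : ℕ, w = d + m * k * n})
    (W : Set ℤ)
    (hW : W = {w : ℤ | ∃ n : ℕ, ∃ x ∈ Xm, w = m * n + x} ∪ Y0 ∪ Y1) :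
    ¬ ∃ C : Set ℤ, IsMinAddComplement C W := by
  rintro ⟨C, hC⟩
  subst hY1 hW
  obtain ⟨B, hB⟩ := hY0fin.bddBelow
  have hmk : 1 ≤ m * k := by nlinarith
  have hWbdd : BddBelow _ :=
    ((bddBelow_setOf_mul_natCast_add hm.le fun x hx => (hXm hx).1).union ⟨B, hB⟩).union
      (bddBelow_setOf_add_mul_natCast (a := m * k) (by positivity) fun d hd => (hD hd).1)
  obtain ⟨N, hN0, hBN⟩ : ∃ N : ℕ, 0 < N ∧ -B ≤ N := ⟨B.natAbs + 1, by omega, by omega⟩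
  have hN : (N : ℤ) ≤ m * k * N := le_mul_of_one_le_left (by positivity) hmk
  refine not_isMinAddComplement_of_bddBelow_of_add_mem hWbdd (p := m * k * N) (by positivity)
    (fun w hw => ?_) C hC
  rcases hw with (hw | hw) | hw
  · left; left
    rw [mul_assoc]
    exact add_mul_mem_setOf_mul_natCast_add hw (by positivity)
  · left; left
    obtain ⟨x, hx, hwx⟩ := hY0cong w hw
    refine mem_setOf_mul_natCast_add_of_modEq hm hx ?_ ?_
    · simpa [mul_assoc] using hwx.add_right (m * (k * N))
    · linarith [hB hw, (hXm hx).2]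
  · exact Or.inr (add_mul_natCast_mem_setOf_add_mul_natCast hw N)

/-- For positive integers `m`, `k`, with `Xm ⊆ [0, m-1]`, `Y⁰` a
finite set of negative integers each congruent mod `m` to an element of `Xm`,
`D ⊆ [0, m-1]` with `D ∩ Xm = ∅`, and `Y¹ = D + mkℕ`, the set
`W = (mℕ + Xm) ∪ Y⁰ ∪ Y¹` has no minimal additive complement. -/
theorem stmt1 (m k : ℤ) (hm : 0 < m) (hk : 0 < k)
    (Xm : Set ℤ) (hXm : Xm ⊆ Set.Icc 0 (m - 1))
    (Y0 : Set ℤ) (hY0fin : Y0.Finite) (hY0neg : ∀ y ∈ Y0, y < 0)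
    (hY0cong : ∀ y ∈ Y0, ∃ x ∈ Xm, y ≡ x [ZMOD m])
    (D : Set ℤ) (hD : D ⊆ Set.Icc 0 (m - 1)) (hDXm : D ∩ Xm = ∅)
    (Y1 : Set ℤ) (hY1 : Y1 = {w : ℤ | ∃ d ∈ D, ∃ n : ℕ, w = d + m * k * n})
    (W : Set ℤ)
    (hW : W = {w : ℤ | ∃ n : ℕ, ∃ x ∈ Xm, w = m * n + x} ∪ Y0 ∪ Y1) :
    ¬ ∃ C : Set ℤ, IsMinAddComplement C W :=
  stmt1_general m k hm hk Xm hXm Y0 hY0fin hY0cong D hD Y1 hY1 W hW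
end

section
/- Let m be a positive integer and let S ⊆ ℤ satisfy the following property: for every set G ⊆ ℤ for which there exists an integer n_G with (−∞, n_G] ∩ ℤ ⊆ G + S, one has (G \ {g}) + S = G + S for every g ∈ G. Let X_m ⊆ {0, 1, …, m−1}, let Y⁽⁰⁾ be a finite set of negative integers each of which is congruent modulo m to some element of X_m, let D ⊆ {0, 1, …, m−1} with D ∩ X_m = ∅, set Y⁽¹⁾ = D + mS = {d + ms : d ∈ D, s ∈ S}, and let W = (mℕ + X_m) ∪ Y⁽⁰⁾ ∪ Y⁽¹⁾, where mℕ + X_m = {mn + x : n ∈ ℕ, x ∈ X_m}. Then there does not exist a minimal additive complement to W. -/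
/-!
Let `C` be a complement of `W` and write `W = P ∪ (D + mS)` with `P = (mℕ + X) ∪ Y⁰`, a set
bounded below by some `L` whose elements are congruent to elements of `X`. We find `c₀ ∈ C`
with `(C \ {c₀}) + W = ℤ`, so `C` is not minimal.

Call the class of `t` mod `m` deep if it contains sums `c + x` (`c ∈ C`, `x ∈ X`) with `c`
arbitrarily small; then every element of that class lies in `(C \ {c₀}) + (mℕ + X)`. If the class
of `t` is not deep, all its sufficiently negative elements are covered by `C + D + mS` alone, i.e.
`G + S` contains a lower ray for `G = {g | t + mg ∈ C + D}`. The hypothesis on `S` then lets us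
drop from `G` the finitely many `g` represented only through `c₀`; this recovers `c₀ + D + mS`.
In particular `C` is infinite, since for finite `C` the set `G` would be finite.

The points `c₀ + P` are recovered from `(C \ {c₀}) + (mℕ + X)` once every class `c₀ + x` contains
some `c + x' ≤ c₀ + L` with `c ≠ c₀`. If `C` is unbounded above, any large `c₀` works, since
finitely many representatives serve all classes; otherwise `C` is unbounded below in some residue
class, and any `c₀` from it makes all the classes `c₀ + x` deep.
-/

open Pointwise

open Set

def IsLowerRayRedundant (S : Set ℤ) : Prop :=
  ∀ G : Set ℤ, (∃ N, Iic N ⊆ G + S) → ∀ g ∈ G, (G \ {g}) + S = G + S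

namespace IsLowerRayRedundant

variable {S G : Set ℤ}

theorem sdiff_add_eq (hS : IsLowerRayRedundant S) {F : Set ℤ} (hF : F.Finite)
    (hG : ∃ N, Iic N ⊆ G + S) : (G \ F) + S = G + S := by
  induction F, hF using Set.Finite.induction_on generalizing G with
  | empty => rw [sdiff_empty]
  | @insert a F _ _ ih =>
    have hGa : (G \ {a}) + S = G + S := by
      by_cases ha : a ∈ G
      · exact hS G hG a ha
      · rw [sdiff_singleton_eq_self ha]
    rw [insert_eq, ← sdiff_sdiff, ih (hGa ▸ hG), hGa]

theorem add_eq_of_finite_sdiff (hS : IsLowerRayRedundant S) {G' : Set ℤ} (hG' : G' ⊆ G)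
    (hfin : (G \ G').Finite) (hG : ∃ N, Iic N ⊆ G + S) : G' + S = G + S := by
  rw [← hS.sdiff_add_eq hfin hG, sdiff_sdiff_cancel_left hG']

theorem not_exists_Iic_subset_of_finite (hS : IsLowerRayRedundant S) (hG : G.Finite) :
    ¬ ∃ N, Iic N ⊆ G + S := by
  rintro ⟨N, hN⟩
  have hempty := hS.sdiff_add_eq hG ⟨N, hN⟩
  rw [sdiff_self, empty_add] at hempty
  exact (hempty ▸ hN) self_mem_Iic

theorem preimage_sdiff_singleton_add_eq (hS : IsLowerRayRedundant S) {m t : ℤ} (hm : m ≠ 0)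
    {C D : Set ℤ} (hD : D.Finite) (c₀ : ℤ)
    (hray : ∃ N, Iic N ⊆ (t + m * ·) ⁻¹' (C + D) + S) :
    (t + m * ·) ⁻¹' ((C \ {c₀}) + D) + S = (t + m * ·) ⁻¹' (C + D) + S := by
  refine hS.add_eq_of_finite_sdiff (preimage_mono (add_subset_add_right sdiff_subset)) ?_ hray
  have hinj : Function.Injective (t + m * ·) :=
    (add_right_injective t).comp (mul_right_injective₀ hm)
  refine (((finite_singleton c₀).add hD).preimage hinj.injOn).subset ?_
  rw [← preimage_sdiff]
  refine preimage_mono ?_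
  rintro _ ⟨⟨c, hc, d, hd, rfl⟩, hnot⟩
  obtain rfl : c = c₀ := by
    by_contra hne
    exact hnot ⟨c, ⟨hc, hne⟩, d, hd, rfl⟩
  exact add_mem_add rfl hd

end IsLowerRayRedundant

theorem exists_forall_exists_eq_le_of_finite_image {α : Type*} {f : ℤ → α} {V : Set ℤ}
    (hf : (f '' V).Finite) : ∃ K, ∀ v ∈ V, ∃ v' ∈ V, f v' = f v ∧ v' ≤ K := by
  obtain ⟨U, hUV, hU⟩ := exists_subset_bijOn V f
  obtain ⟨K, hK⟩ := (Finite.of_finite_image (hU.image_eq ▸ hf) hU.injOn).bddAbove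
  refine ⟨K, fun v hv => ?_⟩
  obtain ⟨v', hv', hfv⟩ := hU.surjOn (mem_image_of_mem f hv)
  exact ⟨v', hUV hv', hfv, hK hv'⟩

theorem exists_mem_not_bddBelow_fiber {α : Type*} {f : ℤ → α} {C : Set ℤ}
    (hf : (f '' C).Finite) (hC : ¬ BddBelow C) : ∃ c₀ ∈ C, ¬ BddBelow {c ∈ C | f c = f c₀} := by
  by_contra! h
  refine hC ?_
  have hC : C = ⋃ r ∈ f '' C, {c ∈ C | f c = r} := by
    ext c
    simpa using fun hc => ⟨c, hc, rfl⟩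
  rw [hC, hf.bddBelow_biUnion]
  rintro _ ⟨c₀, hc₀, rfl⟩
  exact h c₀ hc₀

theorem finite_image_emod {m : ℤ} (hm : 0 < m) (V : Set ℤ) : ((· % m) '' V).Finite :=
  (finite_Ico 0 m).subset <| by
    rintro _ ⟨v, -, rfl⟩
    exact ⟨Int.emod_nonneg v hm.ne', Int.emod_lt_of_pos v hm⟩

def progressions (m : ℤ) (X : Set ℤ) : Set ℤ := {w : ℤ | ∃ n : ℕ, ∃ x ∈ X, w = m * n + x}

section Progressions

variable {m : ℤ} {C X : Set ℤ}

theorem mem_progressions_of_modEq (hm : 0 < m) {x a : ℤ} (hx : x ∈ X) (hxa : x ≤ a)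
    (h : x ≡ a [ZMOD m]) : a ∈ progressions m X := by
  obtain ⟨k, hk⟩ := h.dvd
  have hk0 : 0 ≤ k := nonneg_of_mul_nonneg_right (by linarith) hm
  exact ⟨k.toNat, x, hx, by rw [Int.toNat_of_nonneg hk0]; linarith⟩

theorem mem_add_progressions_of_modEq (hm : 0 < m) {c x z : ℤ} (hc : c ∈ C) (hx : x ∈ X)
    (h : c + x ≡ z [ZMOD m]) (hle : c + x ≤ z) : z ∈ C + progressions m X := by
  refine ⟨c, hc, z - c, mem_progressions_of_modEq hm hx (by linarith) ?_, by ring⟩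
  exact Int.ModEq.add_left_cancel' c (by rwa [add_sub_cancel])

theorem exists_lowerBound_modEq_progressions_union (hm : 0 < m) (hX : ∀ x ∈ X, 0 ≤ x)
    {Y : Set ℤ} (hY : Y.Finite) (hYX : ∀ y ∈ Y, ∃ x ∈ X, y ≡ x [ZMOD m]) :
    ∃ L, ∀ w ∈ progressions m X ∪ Y, L ≤ w ∧ ∃ x ∈ X, w ≡ x [ZMOD m] := by
  obtain ⟨b, hb⟩ := hY.bddBelow
  refine ⟨min 0 b, ?_⟩
  rintro w (⟨n, x, hx, rfl⟩ | hw)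
  · have hmn : 0 ≤ m * n := by positivity
    refine ⟨by linarith [min_le_left 0 b, hX x hx], x, hx, ?_⟩
    rw [add_comm]
    exact Int.add_mul_emod_self_left x m n
  · exact ⟨(min_le_right 0 b).trans (hb hw), hYX w hw⟩

end Progressions

theorem add_mul_mem_add_add_image_iff {m t h : ℤ} {C D S : Set ℤ} :
    t + m * h ∈ C + (D + (m * ·) '' S) ↔ h ∈ (t + m * ·) ⁻¹' (C + D) + S := by
  rw [← add_assoc]
  constructor
  · rintro ⟨u, hu, _, ⟨s, hs, rfl⟩, he⟩
    refine ⟨h - s, ?_, s, hs, by ring⟩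
    simpa only [mem_preimage, show t + m * (h - s) = u by linarith] using hu
  · rintro ⟨g, hg, s, hs, rfl⟩
    exact ⟨_, hg, m * s, ⟨s, hs, rfl⟩, by ring⟩

def IsDeepResidue (m : ℤ) (C X : Set ℤ) (t : ℤ) : Prop :=
  ∀ B, ∃ c ∈ C, ∃ x ∈ X, c < B ∧ c + x ≡ t [ZMOD m]

def HasLowerRepresentatives (m L : ℤ) (C X : Set ℤ) (c₀ : ℤ) : Prop :=
  ∀ x ∈ X, ∃ c ∈ C \ {c₀}, ∃ x' ∈ X, c + x' ≡ c₀ + x [ZMOD m] ∧ c + x' ≤ c₀ + L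

section Complement

variable {m L : ℤ} {C D P S X : Set ℤ}

theorem IsDeepResidue.exists_sdiff_singleton {t : ℤ} (hX : X ⊆ Icc 0 (m - 1))
    (ht : IsDeepResidue m C X t) (c₀ B : ℤ) :
    ∃ c ∈ C \ {c₀}, ∃ x ∈ X, c + x ≡ t [ZMOD m] ∧ c + x ≤ B := by
  obtain ⟨c, hc, x, hx, hlt, hmod⟩ := ht (min c₀ (B - m))
  refine ⟨c, ⟨hc, (hlt.trans_le (min_le_left _ _)).ne⟩, x, hx, hmod, ?_⟩
  linarith [min_le_right c₀ (B - m), (hX hx).2]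

theorem exists_Iic_subset_of_not_isDeepResidue (hm : 0 < m)
    (hC : C + (P ∪ (D + (m * ·) '' S)) = univ)
    (hP : ∀ w ∈ P, L ≤ w ∧ ∃ x ∈ X, w ≡ x [ZMOD m]) {t : ℤ} (ht : ¬ IsDeepResidue m C X t) :
    ∃ N, Iic N ⊆ (t + m * ·) ⁻¹' (C + D) + S := by
  obtain ⟨B, hB⟩ : ∃ B, ∀ c ∈ C, ∀ x ∈ X, c < B → ¬ c + x ≡ t [ZMOD m] := by
    simpa [IsDeepResidue] using ht
  refine ⟨min 0 (B + L - t - 1), fun g hg => ?_⟩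
  have hg0 : g ≤ 0 := hg.trans (min_le_left _ _)
  have hgB : g ≤ B + L - t - 1 := hg.trans (min_le_right _ _)
  have hz : t + m * g < B + L := by nlinarith
  obtain ⟨c, hc, w, hw, hcw⟩ := hC.symm ▸ mem_univ (t + m * g)
  rcases hw with hwP | hwY
  · obtain ⟨hLw, x, hx, hwx⟩ := hP w hwP
    have hcw_mod : c + w ≡ t [ZMOD m] := by
      simp only at hcw
      rw [hcw]
      exact Int.add_mul_emod_self_left t m g
    have hcx : c + x ≡ t [ZMOD m] := (hwx.add_left c).symm.trans hcw_mod
    exact absurd hcx (hB c hc x hx (by linarith))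
  · exact add_mul_mem_add_add_image_iff.1 (hcw ▸ add_mem_add hc hwY)

theorem infinite_of_add_eq_univ (hS : IsLowerRayRedundant S) (hm : 0 < m) (hD : D.Finite)
    (hC : C + (P ∪ (D + (m * ·) '' S)) = univ)
    (hP : ∀ w ∈ P, L ≤ w ∧ ∃ x ∈ X, w ≡ x [ZMOD m]) : C.Infinite := by
  intro hfin
  obtain ⟨B, hB⟩ := hfin.bddBelow
  have hnot : ¬ IsDeepResidue m C X 0 := fun h => by
    obtain ⟨c, hc, -, -, hcB, -⟩ := h B
    exact (hB hc).not_gt hcB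
  have hinj : Function.Injective (0 + m * ·) :=
    (add_right_injective 0).comp (mul_right_injective₀ hm.ne')
  exact hS.not_exists_Iic_subset_of_finite ((hfin.add hD).preimage hinj.injOn)
    (exists_Iic_subset_of_not_isDeepResidue hm hC hP hnot)

theorem exists_hasLowerRepresentatives (hS : IsLowerRayRedundant S) (hm : 0 < m)
    (hX : X ⊆ Icc 0 (m - 1)) (hD : D.Finite) (hC : C + (P ∪ (D + (m * ·) '' S)) = univ)
    (hP : ∀ w ∈ P, L ≤ w ∧ ∃ x ∈ X, w ≡ x [ZMOD m]) :
    ∃ c₀ ∈ C, HasLowerRepresentatives m L C X c₀ := by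
  by_cases hCa : BddAbove C
  · have hCb : ¬ BddBelow C := fun hCb =>
      infinite_of_add_eq_univ hS hm hD hC hP (hCb.finite_of_bddAbove hCa)
    obtain ⟨c₀, hc₀, hfiber⟩ := exists_mem_not_bddBelow_fiber (finite_image_emod hm C) hCb
    refine ⟨c₀, hc₀, fun x hx => IsDeepResidue.exists_sdiff_singleton hX (fun B => ?_) c₀ _⟩
    obtain ⟨c, ⟨hc, hcc₀⟩, hcB⟩ := not_bddBelow_iff.1 hfiber B
    exact ⟨c, hc, x, hx, hcB, Int.ModEq.add_right x hcc₀⟩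
  · obtain ⟨K, hK⟩ := exists_forall_exists_eq_le_of_finite_image (finite_image_emod hm (C + X))
    obtain ⟨c₀, hc₀, hc₀K⟩ := not_bddAbove_iff.1 hCa (max K (K - L))
    refine ⟨c₀, hc₀, fun x hx => ?_⟩
    obtain ⟨_, ⟨c, hc, x', hx', rfl⟩, hmod, hle⟩ := hK (c₀ + x) (add_mem_add hc₀ hx)
    refine ⟨c, ⟨hc, ?_⟩, x', hx', hmod, by linarith [le_max_right K (K - L)]⟩
    rintro rfl
    linarith [(hX hx').1, le_max_left K (K - L)]

theorem sdiff_singleton_add_eq_univ (hS : IsLowerRayRedundant S) (hm : 0 < m)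
    (hX : X ⊆ Icc 0 (m - 1)) (hD : D.Finite) (hXP : progressions m X ⊆ P)
    (hC : C + (P ∪ (D + (m * ·) '' S)) = univ)
    (hP : ∀ w ∈ P, L ≤ w ∧ ∃ x ∈ X, w ≡ x [ZMOD m]) {c₀ : ℤ}
    (hc₀ : HasLowerRepresentatives m L C X c₀) :
    (C \ {c₀}) + (P ∪ (D + (m * ·) '' S)) = univ := by
  refine eq_univ_of_forall fun z => ?_
  obtain ⟨c, hc, w, hw, rfl⟩ := hC.symm ▸ mem_univ z
  by_cases hcc₀ : c = c₀
  swap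
  · exact add_mem_add ⟨hc, hcc₀⟩ hw
  subst hcc₀
  have hprog : C \ {c} + progressions m X ⊆ C \ {c} + (P ∪ (D + (m * ·) '' S)) :=
    add_subset_add_left (hXP.trans subset_union_left)
  rcases hw with hwP | ⟨d, hd, _, ⟨s, hs, rfl⟩, rfl⟩
  · obtain ⟨hLw, x, hx, hwx⟩ := hP w hwP
    obtain ⟨c', hc', x', hx', hmod, hle⟩ := hc₀ x hx
    exact hprog <| mem_add_progressions_of_modEq hm hc' hx' (hmod.trans (hwx.add_left c).symm)
      (by linarith)
  · simp only [← add_assoc]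
    by_cases hdeep : IsDeepResidue m C X (c + d)
    · obtain ⟨c', hc', x', hx', hmod, hle⟩ := hdeep.exists_sdiff_singleton hX c (c + d + m * s)
      exact hprog <| mem_add_progressions_of_modEq hm hc' hx'
        (hmod.trans (Int.add_mul_emod_self_left (c + d) m s).symm) hle
    · refine add_subset_add_left subset_union_right (add_mul_mem_add_add_image_iff.2 ?_)
      rw [hS.preimage_sdiff_singleton_add_eq hm.ne' hD c
        (exists_Iic_subset_of_not_isDeepResidue hm hC hP hdeep)]
      refine add_mul_mem_add_add_image_iff.1 ?_
      rw [add_assoc]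
      exact add_mem_add hc (add_mem_add hd (mem_image_of_mem _ hs))

end Complement

theorem stmt2_general (m : ℤ) (hm : 0 < m) (S : Set ℤ)
    (hS : ∀ G : Set ℤ, (∃ nG : ℤ, ∀ n : ℤ, n ≤ nG → n ∈ G + S) →
      ∀ g ∈ G, (G \ {g}) + S = G + S)
    (Xm : Set ℤ) (hXm : Xm ⊆ Set.Icc 0 (m - 1))
    (Y0 : Set ℤ) (hY0fin : Y0.Finite)
    (hY0cong : ∀ y ∈ Y0, ∃ x ∈ Xm, y ≡ x [ZMOD m])
    (D : Set ℤ) (hD : D ⊆ Set.Icc 0 (m - 1))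
    (Y1 : Set ℤ) (hY1 : Y1 = {w : ℤ | ∃ d ∈ D, ∃ s ∈ S, w = d + m * s})
    (W : Set ℤ)
    (hW : W = {w : ℤ | ∃ n : ℕ, ∃ x ∈ Xm, w = m * n + x} ∪ Y0 ∪ Y1) :
    ¬ ∃ C : Set ℤ, IsMinAddComplement C W := by
  rintro ⟨C, hCW, hmin⟩
  have hS : IsLowerRayRedundant S := hS
  have hDfin : D.Finite := (finite_Icc 0 (m - 1)).subset hD
  have hWeq : W = progressions m Xm ∪ Y0 ∪ (D + (m * ·) '' S) := by
    rw [hW, hY1]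
    congr 1
    ext w
    simp [mem_add, eq_comm]
  obtain ⟨L, hL⟩ := exists_lowerBound_modEq_progressions_union hm (fun x hx => (hXm hx).1)
    hY0fin hY0cong
  rw [hWeq] at hCW hmin
  obtain ⟨c₀, hc₀, hgood⟩ := exists_hasLowerRepresentatives hS hm hXm hDfin hCW hL
  exact hmin _ (sdiff_singleton_ssubset.2 hc₀)
    (sdiff_singleton_add_eq_univ hS hm hXm hDfin subset_union_left hCW hL hgood)

/-- Let `m > 0` and let `S ⊆ ℤ` be such that for every `G ⊆ ℤ`
containing `(-∞, n_G] ∩ ℤ` in `G + S` for some integer `n_G`, one has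
`(G \ {g}) + S = G + S` for all `g ∈ G`. With `Xm`, `Y⁰`, `D` as before and
`Y¹ = D + mS`, the set `W = (mℕ + Xm) ∪ Y⁰ ∪ Y¹` has no minimal additive
complement. -/
theorem stmt2 (m : ℤ) (hm : 0 < m) (S : Set ℤ)
    (hS : ∀ G : Set ℤ, (∃ nG : ℤ, ∀ n : ℤ, n ≤ nG → n ∈ G + S) →
      ∀ g ∈ G, (G \ {g}) + S = G + S)
    (Xm : Set ℤ) (hXm : Xm ⊆ Set.Icc 0 (m - 1))
    (Y0 : Set ℤ) (hY0fin : Y0.Finite) (hY0neg : ∀ y ∈ Y0, y < 0)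
    (hY0cong : ∀ y ∈ Y0, ∃ x ∈ Xm, y ≡ x [ZMOD m])
    (D : Set ℤ) (hD : D ⊆ Set.Icc 0 (m - 1)) (hDXm : D ∩ Xm = ∅)
    (Y1 : Set ℤ) (hY1 : Y1 = {w : ℤ | ∃ d ∈ D, ∃ s ∈ S, w = d + m * s})
    (W : Set ℤ)
    (hW : W = {w : ℤ | ∃ n : ℕ, ∃ x ∈ Xm, w = m * n + x} ∪ Y0 ∪ Y1) :
    ¬ ∃ C : Set ℤ, IsMinAddComplement C W :=
  stmt2_general m hm S hS Xm hXm Y0 hY0fin hY0cong D hD Y1 hY1 W hW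
end

section
/- Let k be a positive integer and let G ⊆ ℤ be a set such that there exists an integer n_G with every integer n ≤ n_G belonging to G + kℕ, where kℕ = {kn : n ∈ ℕ}. Then for every g ∈ G one has (G \ {g}) + kℕ = G + kℕ. -/
open Pointwise

/-! Going down from `g` by enough steps of size `k` lands below `n_G`, hence in `h + kℕ` for some
`h ∈ G`; since the number of steps is positive, `h ≠ g`. So `g ∈ (G \ {g}) + kℕ`, and as `kℕ` is
closed under addition, all of `g + kℕ` lies there too. -/

theorem Set.diff_singleton_add_eq_add_of_mem {M : Type*} [AddSemigroup M] {G S : Set M}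
    (hS : S + S ⊆ S) {g : M} (hg : g ∈ (G \ {g}) + S) : (G \ {g}) + S = G + S := by
  refine (Set.add_subset_add_right Set.sdiff_subset).antisymm ?_
  rintro _ ⟨g', hg', s, hs, rfl⟩
  by_cases hgg : g' = g
  · subst hgg
    obtain ⟨h, hh, t, ht, rfl⟩ := hg
    exact ⟨h, hh, t + s, hS (Set.add_mem_add ht hs), (add_assoc h t s).symm⟩
  · exact Set.add_mem_add ⟨hg', hgg⟩ hs

theorem add_mem_natMultiples {R : Type*} [Semiring R] (k : R) :
    {x : R | ∃ n : ℕ, x = k * n} + {x | ∃ n : ℕ, x = k * n} ⊆ {x | ∃ n : ℕ, x = k * n} := by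
  rintro _ ⟨_, ⟨m, rfl⟩, _, ⟨n, rfl⟩, rfl⟩
  exact ⟨m + n, by rw [Nat.cast_add, mul_add]⟩

theorem mem_diff_singleton_add_natMultiples {k : ℤ} (hk : k ≠ 0) {G : Set ℤ} {g : ℤ} {N : ℕ}
    (hN : N ≠ 0) (hmem : g - k * N ∈ G + {x : ℤ | ∃ n : ℕ, x = k * n}) :
    g ∈ (G \ {g}) + {x : ℤ | ∃ n : ℕ, x = k * n} := by
  obtain ⟨h, hh, _, ⟨m, rfl⟩, hsum⟩ := hmem
  have hne : h ≠ g := by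
    rintro rfl
    have : k * ((m + N : ℕ) : ℤ) = 0 := by push_cast; linarith
    simp only [mul_eq_zero, hk, false_or] at this
    omega
  exact ⟨h, ⟨hh, hne⟩, k * (m + N : ℕ), ⟨_, rfl⟩, by push_cast; linarith⟩

/-- Let `k > 0` and let `G ⊆ ℤ` be such that every integer
`n ≤ n_G` lies in `G + kℕ` for some integer `n_G`. Then for every `g ∈ G`,
`(G \ {g}) + kℕ = G + kℕ`. -/
theorem stmt3 (k : ℤ) (hk : 0 < k) (G : Set ℤ)
    (hG : ∃ nG : ℤ, ∀ n : ℤ, n ≤ nG → n ∈ G + {x : ℤ | ∃ n : ℕ, x = k * n}) :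
    ∀ g ∈ G, (G \ {g}) + {x : ℤ | ∃ n : ℕ, x = k * n}
      = G + {x : ℤ | ∃ n : ℕ, x = k * n} := by
  intro g _
  obtain ⟨nG, hnG⟩ := hG
  obtain ⟨N, hN⟩ := exists_nat_gt (g - nG)
  have hstep : g - k * (N + 1 : ℕ) ≤ nG := by push_cast; nlinarith
  exact Set.diff_singleton_add_eq_add_of_mem (add_mem_natMultiples k)
    (mem_diff_singleton_add_natMultiples hk.ne' N.succ_ne_zero (hnG _ hstep))
end

section
/- Let m be a positive integer, let W ⊆ ℤ be bounded below, and let C ⊆ ℤ satisfy C + W = ℤ. Define J = {j ∈ {0, 1, …, m−1} : the set {c ∈ C : c < 0 and c ≡ j (mod m)} is infinite}. Then for every integer n there exist j ∈ J and w ∈ W with n ≡ j + w (mod m); that is, (J + W) mod m covers all residue classes modulo m. -/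
open Pointwise

/-! Only finitely many elements of `S = {c ∈ C | c < 0}` lie in residue classes that meet `S`
finitely often, so all sufficiently small elements of `S` lie in classes met infinitely often.
Since `W` is bounded below, writing a very negative `x ≡ n [ZMOD m]` as `x = c + w` forces
`c ∈ S` to be very negative, hence its residue `c % m` lies in `J`. -/

namespace Int

theorem sep_modEq_emod (S : Set ℤ) (m c : ℤ) :
    {d ∈ S | d ≡ c % m [ZMOD m]} = {d ∈ S | d ≡ c [ZMOD m]} := by
  simp only [Int.ModEq, emod_emod]

theorem finite_setOf_finite_modEq {m : ℤ} (hm : m ≠ 0) (S : Set ℤ) :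
    {c ∈ S | {d ∈ S | d ≡ c [ZMOD m]}.Finite}.Finite := by
  have hres : {j ∈ Set.Ico 0 |m| | {d ∈ S | d ≡ j [ZMOD m]}.Finite}.Finite :=
    (Set.finite_Ico 0 |m|).subset (Set.sep_subset _ _)
  refine (hres.biUnion fun j hj => hj.2).subset ?_
  rintro c ⟨hcS, hfin⟩
  refine Set.mem_biUnion (x := c % m) ⟨⟨emod_nonneg c hm, emod_lt_abs c hm⟩, ?_⟩ ⟨hcS, ?_⟩
  · rwa [sep_modEq_emod]
  · exact (mod_modEq c m).symm

theorem exists_forall_lt_infinite_modEq {m : ℤ} (hm : m ≠ 0) (S : Set ℤ) :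
    ∃ L, ∀ c ∈ S, c < L → {d ∈ S | d ≡ c [ZMOD m]}.Infinite := by
  obtain ⟨L, hL⟩ := (finite_setOf_finite_modEq hm S).bddBelow
  exact ⟨L, fun c hcS hcL hfin => (hL ⟨hcS, hfin⟩).not_gt hcL⟩

theorem exists_le_modEq {m : ℤ} (hm : m ≠ 0) (n T : ℤ) : ∃ x ≤ T, x ≡ n [ZMOD m] :=
  ⟨T - (T - n) % m, by linarith [emod_nonneg (T - n) hm],
    modEq_iff_dvd.mpr ⟨-((T - n) / m), by rw [emod_def]; ring⟩⟩

end Int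

theorem exists_add_modEq_lt_of_add_eq_univ {C W : Set ℤ} (hW : BddBelow W)
    (hC : C + W = Set.univ) {m : ℤ} (hm : m ≠ 0) (n L : ℤ) :
    ∃ c ∈ C, ∃ w ∈ W, c < L ∧ c + w ≡ n [ZMOD m] := by
  obtain ⟨b, hb⟩ := hW
  obtain ⟨x, hxle, hxn⟩ := Int.exists_le_modEq hm n (L + b - 1)
  obtain ⟨c, hcC, w, hwW, rfl⟩ := Set.mem_add.mp (hC ▸ Set.mem_univ x)
  exact ⟨c, hcC, w, hwW, by linarith [hb hwW], hxn⟩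

/-- Let `m > 0`, `W ⊆ ℤ` bounded below, `C + W = ℤ`, and let
`J` be the set of residues `j ∈ [0, m-1]` such that infinitely many negative
elements of `C` are congruent to `j` mod `m`. Then every integer is congruent
mod `m` to `j + w` for some `j ∈ J`, `w ∈ W`. -/
theorem stmt7 (m : ℤ) (hm : 0 < m) (W C : Set ℤ) (hWbdd : BddBelow W)
    (hC : C + W = Set.univ)
    (J : Set ℤ)
    (hJ : J = {j ∈ Set.Icc 0 (m - 1) |
      {c ∈ C | c < 0 ∧ c ≡ j [ZMOD m]}.Infinite}) :
    ∀ n : ℤ, ∃ j ∈ J, ∃ w ∈ W, n ≡ j + w [ZMOD m] := by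
  intro n
  obtain ⟨L, hL⟩ := Int.exists_forall_lt_infinite_modEq hm.ne' {c ∈ C | c < 0}
  obtain ⟨c, hcC, w, hwW, hcL, hcw⟩ :=
    exists_add_modEq_lt_of_add_eq_univ hWbdd hC hm.ne' n (min L 0)
  have hinf := hL c ⟨hcC, by omega⟩ (by omega)
  rw [← Int.sep_modEq_emod] at hinf
  have hcJ : c % m ∈ J := by
    rw [hJ]
    refine ⟨⟨Int.emod_nonneg c hm.ne', by linarith [Int.emod_lt_of_pos c hm]⟩, ?_⟩
    simpa only [Set.mem_ofPred_eq, and_assoc] using hinf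
  exact ⟨c % m, hcJ, w, hwW, hcw.symm.trans ((Int.mod_modEq c m).symm.add_right w)⟩
end

section
/- Let m be a positive integer, let X ⊆ {0, 1, …, m−1}, let W ⊆ ℤ be a set with mℕ + X ⊆ W (where mℕ + X = {mn + x : n ∈ ℕ, x ∈ X}), and let C ⊆ ℤ satisfy C + W = ℤ. Define J = {j ∈ {0, 1, …, m−1} : the set {c ∈ C : c < 0 and c ≡ j (mod m)} is infinite}. Suppose that for every integer n there exist j ∈ J and x ∈ X with n ≡ j + x (mod m). Then for every c₀ ∈ C one has (C \ {c₀}) + W = ℤ; in particular, C is not a minimal additive complement to W. -/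
/-! Every integer `n` is `j + x` modulo `m` with `x ∈ X` and infinitely many negative `c ∈ C`
in the class of `j`. Among those `c` we may avoid any given `c₀` and take `c < n - x`; then
`n - c ≡ x` and `n - c > x`, so `n - c ∈ mℕ + X ⊆ W`. Hence no single element of `C` is needed. -/

open Pointwise

theorem Int.exists_nat_eq_mul_add_of_modEq {m x y : ℤ} (hm : 0 < m) (hxy : x ≤ y)
    (h : y ≡ x [ZMOD m]) : ∃ k : ℕ, y = m * k + x := by
  obtain ⟨k, hk⟩ := h.symm.dvd
  have hk0 : 0 ≤ k := by nlinarith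
  exact ⟨k.toNat, by rw [Int.toNat_of_nonneg hk0]; linarith⟩

theorem Set.Infinite.exists_lt_ne_of_bddAbove {α : Type*} [LinearOrder α] [LocallyFiniteOrder α]
    {S : Set α} (hS : S.Infinite) (hbdd : BddAbove S)
    (b c₀ : α) : ∃ c ∈ S, c < b ∧ c ≠ c₀ := by
  have hS' : (S \ {c₀}).Infinite := hS.sdiff (Set.finite_singleton c₀)
  have hunbdd : ¬BddBelow (S \ {c₀}) := fun hbelow =>
    hS' (hbelow.finite_of_bddAbove (hbdd.mono Set.sdiff_subset))
  obtain ⟨c, ⟨hcS, hcne⟩, hcb⟩ := not_bddBelow_iff.mp hunbdd b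
  exact ⟨c, hcS, hcb, hcne⟩

theorem sdiff_singleton_add_eq_univ_of_residue_cover {m : ℤ} (hm : 0 < m) {X W C J : Set ℤ}
    (hWX : {w : ℤ | ∃ n : ℕ, ∃ x ∈ X, w = m * n + x} ⊆ W)
    (hJ : ∀ j ∈ J, {c ∈ C | c < 0 ∧ c ≡ j [ZMOD m]}.Infinite)
    (hcover : ∀ n : ℤ, ∃ j ∈ J, ∃ x ∈ X, n ≡ j + x [ZMOD m]) (c₀ : ℤ) :
    (C \ {c₀}) + W = Set.univ := by
  refine Set.eq_univ_of_forall fun n => ?_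
  obtain ⟨j, hj, x, hx, hnjx⟩ := hcover n
  have hbdd : BddAbove {c ∈ C | c < 0 ∧ c ≡ j [ZMOD m]} := ⟨0, fun c hc => hc.2.1.le⟩
  obtain ⟨c, ⟨hcC, -, hcj⟩, hclt, hcne⟩ := (hJ j hj).exists_lt_ne_of_bddAbove hbdd (n - x) c₀
  have hmod : n - c ≡ x [ZMOD m] := by
    simpa only [add_sub_cancel_left] using (hnjx.trans (hcj.symm.add_right x)).sub_right c
  obtain ⟨k, hk⟩ := Int.exists_nat_eq_mul_add_of_modEq hm (by linarith) hmod
  exact ⟨c, ⟨hcC, hcne⟩, n - c, hWX ⟨k, x, hx, hk⟩, add_sub_cancel c n⟩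

theorem not_isMinAddComplement_of_forall_sdiff_singleton {C W : Set ℤ}
    (h : ∀ c₀ ∈ C, (C \ {c₀}) + W = Set.univ) : ¬IsMinAddComplement C W := by
  rintro ⟨hCW, hmin⟩
  obtain ⟨⟨c, hc⟩, -⟩ := Set.add_nonempty.mp (hCW ▸ Set.univ_nonempty)
  exact hmin (C \ {c}) (Set.sdiff_singleton_ssubset.mpr hc) (h c hc)

theorem stmt8_general (m : ℤ) (hm : 0 < m) (X : Set ℤ)
    (W C : Set ℤ)
    (hWX : {w : ℤ | ∃ n : ℕ, ∃ x ∈ X, w = m * n + x} ⊆ W)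
    (J : Set ℤ)
    (hJ : J = {j ∈ Set.Icc 0 (m - 1) |
      {c ∈ C | c < 0 ∧ c ≡ j [ZMOD m]}.Infinite})
    (hcover : ∀ n : ℤ, ∃ j ∈ J, ∃ x ∈ X, n ≡ j + x [ZMOD m]) :
    (∀ c₀ ∈ C, (C \ {c₀}) + W = Set.univ) ∧ ¬ IsMinAddComplement C W := by
  have hinf : ∀ j ∈ J, {c ∈ C | c < 0 ∧ c ≡ j [ZMOD m]}.Infinite := fun j hj => (hJ ▸ hj).2
  have hsdiff : ∀ c₀ ∈ C, (C \ {c₀}) + W = Set.univ := fun c₀ _ =>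
    sdiff_singleton_add_eq_univ_of_residue_cover hm hWX hinf hcover c₀
  exact ⟨hsdiff, not_isMinAddComplement_of_forall_sdiff_singleton hsdiff⟩

/-- Let `m > 0`, `X ⊆ [0, m-1]`, `W ⊇ mℕ + X`, and `C + W = ℤ`.
Let `J` be the set of residues `j ∈ [0, m-1]` with infinitely many negative
elements of `C` congruent to `j` mod `m`. If every integer is congruent mod `m`
to `j + x` for some `j ∈ J`, `x ∈ X`, then `(C \ {c₀}) + W = ℤ` for every
`c₀ ∈ C`; in particular `C` is not a minimal additive complement to `W`. -/
theorem stmt8 (m : ℤ) (hm : 0 < m) (X : Set ℤ) (hX : X ⊆ Set.Icc 0 (m - 1))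
    (W C : Set ℤ)
    (hWX : {w : ℤ | ∃ n : ℕ, ∃ x ∈ X, w = m * n + x} ⊆ W)
    (hC : C + W = Set.univ)
    (J : Set ℤ)
    (hJ : J = {j ∈ Set.Icc 0 (m - 1) |
      {c ∈ C | c < 0 ∧ c ≡ j [ZMOD m]}.Infinite})
    (hcover : ∀ n : ℤ, ∃ j ∈ J, ∃ x ∈ X, n ≡ j + x [ZMOD m]) :
    (∀ c₀ ∈ C, (C \ {c₀}) + W = Set.univ) ∧ ¬ IsMinAddComplement C W :=
  stmt8_general m hm X W C hWX J hJ hcover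
end
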